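/- arXiv:2203.17097 — 5 statements merged into one kernel-verified Lean document; each statement's English description precedes it below -/
import Mathlib

section
/- The local complex blow-down α_ℂ is continuous, proper and surjective, and its restriction to α_ℂ⁻¹(U), where U = {z ∈ ℂⁿ : z₁⋯z_k ≠ 0}, is a homeomorphism onto U. -/
/-- `S¹ × [0,∞)`, where `S¹ ⊂ ℂ` is the unit circle (Mathlib's `Circle`). -/
abbrev CircleRay : Type := Circle × (Set.Ici (0 : ℝ))

/-- The local complex blow-down
`α_ℂ : ((S¹ × [0,∞))^k) × ℂ^{n−k} → ℂⁿ = ℂ^k × ℂ^{n−k}`,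
`α_ℂ(((θ₁,r₁),…,(θ_k,r_k)), z) = (θ₁r₁, …, θ_k r_k, z)`. -/
noncomputable def blowDownC (k m : ℕ) (p : (Fin k → CircleRay) × (Fin m → ℂ)) :
    (Fin k → ℂ) × (Fin m → ℂ) :=
  (fun i => ((p.1 i).1 : ℂ) * (((p.1 i).2 : ℝ) : ℂ), p.2)

/-- The set `U = {z ∈ ℂⁿ : z₁⋯z_k ≠ 0}`. -/
def UsetC (k m : ℕ) : Set ((Fin k → ℂ) × (Fin m → ℂ)) := {z | ∏ i, z.1 i ≠ 0}

/-!
Each factor `(θ, r) ↦ θ r` of the blow-down is proper, since `‖θ r‖ = r` pulls bounded sets back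
into `S¹ × [0, R]`; it is surjective by polar coordinates, and injective away from `r = 0`.
Restricting a proper map to the preimage of any set keeps it proper, hence closed, and a
continuous closed bijection is a homeomorphism, so no inverse has to be written down.
-/

open Function Set Topology

namespace CircleRay

noncomputable def toComplex (p : CircleRay) : ℂ := p.1 * ((p.2 : ℝ) : ℂ)

lemma norm_toComplex (p : CircleRay) : ‖toComplex p‖ = p.2 := by
  simp [toComplex, Circle.norm_coe, abs_of_nonneg (mem_Ici.1 p.2.2)]

lemma continuous_toComplex : Continuous toComplex := by
  unfold toComplex; fun_prop

lemma isProperMap_toComplex : IsProperMap toComplex := by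
  refine isProperMap_iff_isCompact_preimage.2 ⟨continuous_toComplex, fun K hK => ?_⟩
  obtain ⟨R, hR⟩ := hK.isBounded.subset_closedBall 0
  have hbounded : toComplex ⁻¹' K ⊆ univ ×ˢ (Subtype.val ⁻¹' Icc 0 R) := by
    intro p hp
    have hpR := hR hp
    rw [mem_closedBall_zero_iff, norm_toComplex] at hpR
    exact ⟨trivial, p.2.2, hpR⟩
  have hcompact : IsCompact (univ ×ˢ (Subtype.val ⁻¹' Icc 0 R) : Set CircleRay) :=
    isCompact_univ.prod (IsClosedEmbedding.subtypeVal isClosed_Ici |>.isCompact_preimage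
      isCompact_Icc)
  exact hcompact.of_isClosed_subset (hK.isClosed.preimage continuous_toComplex) hbounded

lemma surjective_toComplex : Surjective toComplex := fun z =>
  ⟨(Circle.exp z.arg, ⟨‖z‖, norm_nonneg z⟩), by
    simpa [toComplex, mul_comm] using Complex.norm_mul_exp_arg_mul_I z⟩

lemma injOn_toComplex : InjOn toComplex (toComplex ⁻¹' {0}ᶜ) := by
  intro p hp q _ hpq
  have hr : (p.2 : ℝ) = q.2 := by rw [← norm_toComplex, hpq, norm_toComplex]
  have hr0 : ((p.2 : ℝ) : ℂ) ≠ 0 := by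
    rintro h
    exact hp (by simp [toComplex, h])
  refine Prod.ext (Circle.ext (mul_right_cancel₀ hr0 ?_)) (Subtype.ext hr)
  simpa only [toComplex, hr] using hpq

end CircleRay

open CircleRay

lemma mem_UsetC_iff {k m : ℕ} {z : (Fin k → ℂ) × (Fin m → ℂ)} :
    z ∈ UsetC k m ↔ ∀ i, z.1 i ≠ 0 :=
  Finset.prod_ne_zero_iff.trans (by simp)

lemma blowDownC_eq_prodMap (k m : ℕ) :
    blowDownC k m = Prod.map (fun x i => toComplex (x i)) id :=
  rfl

lemma isProperMap_blowDownC (k m : ℕ) : IsProperMap (blowDownC k m) := by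
  rw [blowDownC_eq_prodMap]
  exact (IsProperMap.pi_map fun _ => isProperMap_toComplex).prodMap isProperMap_id

lemma surjective_blowDownC (k m : ℕ) : Surjective (blowDownC k m) := by
  rw [blowDownC_eq_prodMap]
  exact (Surjective.piMap fun _ => surjective_toComplex).prodMap surjective_id

lemma injOn_blowDownC_preimage_UsetC (k m : ℕ) :
    InjOn (blowDownC k m) (blowDownC k m ⁻¹' UsetC k m) := by
  intro p hp q hq hpq
  refine Prod.ext (funext fun i => ?_) (congrArg Prod.snd hpq :)
  exact injOn_toComplex (mem_UsetC_iff.1 hp i) (mem_UsetC_iff.1 hq i)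
    (congrFun (congrArg Prod.fst hpq) i)

lemma IsProperMap.isHomeomorph_restrictPreimage {X Y : Type*} [TopologicalSpace X]
    [TopologicalSpace Y] {f : X → Y} (hf : IsProperMap f) {s : Set Y} (hsurj : s ⊆ range f)
    (hinj : InjOn f (f ⁻¹' s)) : IsHomeomorph (s.restrictPreimage f) := by
  have hres := hf.restrictPreimage s
  have hinj' : Injective (s.restrictPreimage f) := fun p q hpq =>
    Subtype.ext (hinj p.2 q.2 (congrArg Subtype.val hpq))
  have hsurj' : Surjective (s.restrictPreimage f) := fun y => by
    obtain ⟨x, hx⟩ := hsurj y.2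
    exact ⟨⟨x, show f x ∈ s from hx ▸ y.2⟩, Subtype.ext hx⟩
  exact isHomeomorph_iff_continuous_isClosedMap_bijective.2
    ⟨hres.continuous, hres.isClosedMap, hinj', hsurj'⟩

theorem blowDownC_properties_general (k m : ℕ) :
    Continuous (blowDownC k m) ∧ IsProperMap (blowDownC k m) ∧
    Function.Surjective (blowDownC k m) ∧
    ∃ e : (blowDownC k m ⁻¹' UsetC k m) ≃ₜ (UsetC k m),
      ∀ p : (blowDownC k m ⁻¹' UsetC k m),
        (e p : (Fin k → ℂ) × (Fin m → ℂ)) =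
          blowDownC k m (p : (Fin k → CircleRay) × (Fin m → ℂ)) := by
  have hhomeo := (isProperMap_blowDownC k m).isHomeomorph_restrictPreimage
    (fun z _ => surjective_blowDownC k m z) (injOn_blowDownC_preimage_UsetC k m)
  exact ⟨(isProperMap_blowDownC k m).continuous, isProperMap_blowDownC k m,
    surjective_blowDownC k m, hhomeo.homeomorph _, fun _ => rfl⟩

/-- The local complex blow-down `α_ℂ` is continuous, proper and surjective, and its
restriction to `α_ℂ⁻¹(U)`, where `U = {z ∈ ℂⁿ : z₁⋯z_k ≠ 0}`, is a homeomorphism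
onto `U`. (Here `n = k + m ≥ k ≥ 1`.) -/
theorem blowDownC_properties (k m : ℕ) (hk : 1 ≤ k) :
    Continuous (blowDownC k m) ∧ IsProperMap (blowDownC k m) ∧
    Function.Surjective (blowDownC k m) ∧
    ∃ e : (blowDownC k m ⁻¹' UsetC k m) ≃ₜ (UsetC k m),
      ∀ p : (blowDownC k m ⁻¹' UsetC k m),
        (e p : (Fin k → ℂ) × (Fin m → ℂ)) =
          blowDownC k m (p : (Fin k → CircleRay) × (Fin m → ℂ)) :=
  blowDownC_properties_general k m
end

section
/- Let S = {x ∈ ℝⁿ : x₁ = ⋯ = x_k = 0} and let α be the local real blow-down. Then α⁻¹(S) = {(((ε₁,0),…,(ε_k,0)), y) : ε ∈ {-1,1}^k, y ∈ ℝ^{n−k}}, the restriction α : α⁻¹(S) → S is a covering map, every fibre of this restriction has exactly 2^k elements, and α⁻¹(S) is homeomorphic over S to the trivial cover {-1,1}^k × S. -/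
/-- The half-ray with signs `{-1,1} × [0,∞)` with its subspace (product) topology. -/
abbrev SignRay : Type := ({-1, 1} : Set ℝ) × (Set.Ici (0 : ℝ))

/-- The local real blow-down
`α(((ε₁,r₁),…,(ε_k,r_k)), y) = (ε₁r₁, …, ε_k r_k, y)`. -/
def blowDownR (k m : ℕ) (p : (Fin k → SignRay) × (Fin m → ℝ)) :
    (Fin k → ℝ) × (Fin m → ℝ) :=
  (fun i => ((p.1 i).1 : ℝ) * ((p.1 i).2 : ℝ), p.2)

/-- The stratum `S = {x ∈ ℝⁿ : x₁ = ⋯ = x_k = 0}`. -/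
def Sset (k m : ℕ) : Set ((Fin k → ℝ) × (Fin m → ℝ)) := {x | ∀ i, x.1 i = 0}

/-! Over `S` every radial coordinate `rᵢ` vanishes, so a point of `α⁻¹(S)` is nothing but a sign
vector `ε ∈ {-1,1}^k` together with its image in `S`. This identifies `α : α⁻¹(S) → S` with the
projection `{-1,1}^k × S → S`, a globally trivial bundle with discrete fibre of `2^k` points. -/

open Bundle

section GloballyTrivial

variable {E F B : Type*} [TopologicalSpace E] [TopologicalSpace F] [TopologicalSpace B]
  {f : E → B}

def Bundle.Trivialization.ofHomeomorphProd (e : E ≃ₜ F × B) (he : ∀ x, (e x).2 = f x) :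
    Trivialization F f where
  toOpenPartialHomeomorph := (e.trans (Homeomorph.prodComm F B)).toOpenPartialHomeomorph
  baseSet := Set.univ
  open_baseSet := isOpen_univ
  source_eq := rfl
  target_eq := by simp
  proj_toFun x _ := he x

theorem IsCoveringMap.of_homeomorph_prod [DiscreteTopology F] (e : E ≃ₜ F × B)
    (he : ∀ x, (e x).2 = f x) : IsCoveringMap f :=
  IsFiberBundle.isCoveringMap fun _ => ⟨Trivialization.ofHomeomorphProd e he, Set.mem_univ _⟩

theorem Nat.card_preimage_singleton_of_homeomorph_prod (e : E ≃ₜ F × B)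
    (he : ∀ x, (e x).2 = f x) (b : B) : Nat.card (f ⁻¹' {b}) = Nat.card F :=
  Nat.card_congr
    ((Trivialization.ofHomeomorphProd e he).preimageSingletonHomeomorph (Set.mem_univ b)).toEquiv

end GloballyTrivial

theorem coe_sign_ne_zero (ε : ({-1, 1} : Set ℝ)) : (ε : ℝ) ≠ 0 := by
  rcases ε.2 with h | h <;> rw [h] <;> norm_num

theorem Nat.card_set_neg_one_one : Nat.card ({-1, 1} : Set ℝ) = 2 := by
  rw [Nat.card_coe_set_eq, Set.ncard_pair (by norm_num)]

theorem mem_blowDownR_preimage_Sset_iff {k m : ℕ} (q : (Fin k → SignRay) × (Fin m → ℝ)) :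
    q ∈ blowDownR k m ⁻¹' Sset k m ↔ ∀ i, ((q.1 i).2 : ℝ) = 0 :=
  forall_congr' fun i => by
    simp only [blowDownR, mul_eq_zero, coe_sign_ne_zero, false_or]

@[fun_prop]
theorem continuous_blowDownR (k m : ℕ) : Continuous (blowDownR k m) := by
  unfold blowDownR; fun_prop

def blowDownRStratumHomeomorph (k m : ℕ) :
    (blowDownR k m ⁻¹' Sset k m) ≃ₜ ((Fin k → ({-1, 1} : Set ℝ)) × Sset k m) where
  toFun q := (fun i => (q.1.1 i).1, (Sset k m).restrictPreimage (blowDownR k m) q)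
  invFun z := ⟨(fun i => (z.1 i, ⟨0, Set.self_mem_Ici⟩), z.2.1.2), fun i => by simp [blowDownR]⟩
  left_inv q := by
    ext i
    · rfl
    · simp [(mem_blowDownR_preimage_Sset_iff q.1).1 q.2 i]
    · rfl
  right_inv z := by
    ext i
    · rfl
    · simp [blowDownR, z.2.2 i]
    · rfl
  continuous_toFun := by fun_prop
  continuous_invFun := by fun_prop

theorem blowDownR_cover_stratum_general (k m : ℕ) :
    blowDownR k m ⁻¹' Sset k m
        = {q : (Fin k → SignRay) × (Fin m → ℝ) | ∀ i, ((q.1 i).2 : ℝ) = 0} ∧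
    IsCoveringMap ((Sset k m).restrictPreimage (blowDownR k m)) ∧
    (∀ p : Sset k m,
      Nat.card (((Sset k m).restrictPreimage (blowDownR k m)) ⁻¹' ({p} : Set (Sset k m)))
        = 2 ^ k) ∧
    ∃ e : (blowDownR k m ⁻¹' Sset k m) ≃ₜ ((Fin k → ({-1, 1} : Set ℝ)) × (Sset k m)),
      ∀ q, (e q).2 = (Sset k m).restrictPreimage (blowDownR k m) q := by
  have he : ∀ q, (blowDownRStratumHomeomorph k m q).2 =
      (Sset k m).restrictPreimage (blowDownR k m) q := fun _ => rfl
  refine ⟨Set.ext mem_blowDownR_preimage_Sset_iff, .of_homeomorph_prod _ he, fun p => ?_, _, he⟩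
  rw [Nat.card_preimage_singleton_of_homeomorph_prod _ he, Nat.card_pi, Finset.prod_const,
    Nat.card_set_neg_one_one, Finset.card_univ, Fintype.card_fin]

/-- Let `S = {x ∈ ℝⁿ : x₁ = ⋯ = x_k = 0}` and `α` the local real blow-down (with
`n = k + m ≥ k ≥ 1`). Then `α⁻¹(S) = {(((ε₁,0),…,(ε_k,0)), y)}` is the set of points
all of whose `[0,∞)`-coordinates vanish, the restriction `α : α⁻¹(S) → S` is a
covering map, every fibre of this restriction has exactly `2^k` elements, and
`α⁻¹(S)` is homeomorphic over `S` to the trivial cover `{-1,1}^k × S`. -/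
theorem blowDownR_cover_stratum (k m : ℕ) (hk : 1 ≤ k) :
    blowDownR k m ⁻¹' Sset k m
        = {q : (Fin k → SignRay) × (Fin m → ℝ) | ∀ i, ((q.1 i).2 : ℝ) = 0} ∧
    IsCoveringMap ((Sset k m).restrictPreimage (blowDownR k m)) ∧
    (∀ p : Sset k m,
      Nat.card (((Sset k m).restrictPreimage (blowDownR k m)) ⁻¹' ({p} : Set (Sset k m)))
        = 2 ^ k) ∧
    ∃ e : (blowDownR k m ⁻¹' Sset k m) ≃ₜ ((Fin k → ({-1, 1} : Set ℝ)) × (Sset k m)),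
      ∀ q, (e q).2 = (Sset k m).restrictPreimage (blowDownR k m) q :=
  blowDownR_cover_stratum_general k m
end

section
/- Let k ≥ 1 and let D = {x ∈ [0,∞)^k : x₁⋯x_k = 0}. There exists a homeomorphism H : D × [0,∞) → [0,∞)^k such that H(x,t)₁⋯H(x,t)_k = t and H(x,0) = x for all x ∈ D and t ∈ [0,∞). -/
/-!
The map `y ↦ (y - (min y)·𝟙, min y)` identifies `[0,∞)^k` with `D × [0,∞)`, and in these
coordinates the product of the coordinates becomes `(x, m) ↦ ∏ i, (x i + m)`. For fixed `x ∈ D`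
this is a continuous, strictly increasing map of `[0,∞)` onto itself vanishing at `0`, so
`(x, m) ↦ (x, ∏ i, (x i + m))` is a continuous bijection of `D × [0,∞)`. Its inverse is continuous
since, for a continuous family of strictly increasing maps `g x`, strict inequalities
`g x₀ a < t₀ < g x₀ b` persist near `(x₀, t₀)` and so trap the solution of `g x s = t` in `(a, b)`.
Then `H(x, t) = x + s·𝟙`, where `s` solves `∏ i, (x i + s) = t`.
-/

/-- The closed orthant `[0,∞)^k` with its (subspace/product) topology. -/
abbrev Orthant (k : ℕ) : Type := Fin k → (Set.Ici (0 : ℝ))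

/-- The boundary `D = {x ∈ [0,∞)^k : x₁⋯x_k = 0}` of the closed orthant. -/
def orthantBoundary (k : ℕ) : Set (Orthant k) := {x | ∏ i, (x i : ℝ) = 0}

open Function Filter Topology Set

section StrictMonoFiberwise

variable {X Y Z : Type*} [TopologicalSpace X] [TopologicalSpace Y] [TopologicalSpace Z]
  [LinearOrder Y] [OrderTopology Y] [LinearOrder Z] [OrderClosedTopology Z]

theorem continuous_uncurry_of_strictMono_rightInverse {g : X → Y → Z}
    (hg : Continuous (uncurry g)) (hmono : ∀ x, StrictMono (g x)) {s : X → Z → Y}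
    (hs : ∀ x t, g x (s x t) = t) : Continuous (uncurry s) := by
  refine continuous_iff_continuousAt.2 fun ⟨x₀, t₀⟩ =>
    tendsto_order.2 ⟨fun a ha => ?_, fun b hb => ?_⟩
  · have hlt : g x₀ a < t₀ := hs x₀ t₀ ▸ hmono x₀ ha
    have hga : Tendsto (fun q : X × Z => g q.1 a) (𝓝 (x₀, t₀)) (𝓝 (g x₀ a)) :=
      (hg.comp (continuous_fst.prodMk continuous_const)).continuousAt
    filter_upwards [hga.eventually_lt continuousAt_snd hlt] with ⟨x, t⟩ hq
    exact (hmono x).lt_iff_lt.1 (by rwa [uncurry_apply_pair, hs])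
  · have hlt : t₀ < g x₀ b := hs x₀ t₀ ▸ hmono x₀ hb
    have hgb : Tendsto (fun q : X × Z => g q.1 b) (𝓝 (x₀, t₀)) (𝓝 (g x₀ b)) :=
      (hg.comp (continuous_fst.prodMk continuous_const)).continuousAt
    filter_upwards [continuousAt_snd.eventually_lt hgb hlt] with ⟨x, t⟩ hq
    exact (hmono x).lt_iff_lt.1 (by rwa [uncurry_apply_pair, hs])

@[simps]
noncomputable def Homeomorph.prodOfStrictMonoFiberwise (g : X → Y → Z)
    (hg : Continuous (uncurry g)) (hmono : ∀ x, StrictMono (g x))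
    (hsurj : ∀ x, Surjective (g x)) : X × Y ≃ₜ X × Z where
  toFun p := (p.1, g p.1 p.2)
  invFun q := (q.1, surjInv (hsurj q.1) q.2)
  left_inv p := Prod.ext rfl ((hmono p.1).injective (surjInv_eq (hsurj p.1) _))
  right_inv q := Prod.ext rfl (surjInv_eq (hsurj q.1) q.2)
  continuous_toFun := continuous_fst.prodMk hg
  continuous_invFun := continuous_fst.prodMk
    (continuous_uncurry_of_strictMono_rightInverse hg hmono fun x => surjInv_eq (hsurj x))

end StrictMonoFiberwise

section ProdAdd

variable {ι : Type*} [Fintype ι] [Nonempty ι]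

theorem strictMonoOn_prod_add {R : Type*} [CommRing R] [LinearOrder R] [IsStrictOrderedRing R]
    {x : ι → R} (hx : ∀ i, 0 ≤ x i) : StrictMonoOn (fun s => ∏ i, (x i + s)) (Ici 0) := by
  intro s hs t _ hst
  dsimp only
  have ht_pos : ∀ i, 0 < x i + t := fun i => add_pos_of_nonneg_of_pos (hx i) (hs.out.trans_lt hst)
  by_cases hzero : ∃ i, x i + s = 0
  · obtain ⟨i, hi⟩ := hzero
    rw [Finset.prod_eq_zero (f := fun i => x i + s) (Finset.mem_univ i) hi]
    exact Finset.prod_pos fun i _ => ht_pos i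
  · simp only [not_exists] at hzero
    exact Finset.prod_lt_prod_of_nonempty
      (fun i _ => (add_nonneg (hx i) hs.out).lt_of_ne (Ne.symm (hzero i)))
      (fun i _ => add_lt_add_right hst _) Finset.univ_nonempty

theorem tendsto_prod_add_atTop {R : Type*} [CommRing R] [LinearOrder R] [IsStrictOrderedRing R]
    {x : ι → R} (hx : ∀ i, 0 ≤ x i) : Tendsto (fun s => ∏ i, (x i + s)) atTop atTop := by
  refine tendsto_atTop_mono' atTop ?_ (tendsto_pow_atTop (Fintype.card_ne_zero (α := ι)))
  filter_upwards [eventually_ge_atTop 0] with s hs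
  rw [← Finset.card_univ, ← Finset.prod_const]
  exact Finset.prod_le_prod (fun _ _ => hs) fun i _ => le_add_of_nonneg_left (hx i)

theorem exists_prod_add_eq {x : ι → ℝ} (hx : ∀ i, 0 ≤ x i) (h0 : ∏ i, x i = 0) {t : ℝ}
    (ht : 0 ≤ t) : ∃ s, 0 ≤ s ∧ ∏ i, (x i + s) = t := by
  have hcont : ContinuousOn (fun s => ∏ i, (x i + s)) (Ici 0) := by fun_prop
  have ht' : t ∈ Ici (∏ i, (x i + 0)) := by simpa [h0] using ht
  simpa using intermediate_value_Ici hcont (tendsto_prod_add_atTop hx) ht'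

end ProdAdd

section Orthant

variable {k : ℕ}

theorem mem_orthantBoundary_iff {x : Orthant k} :
    x ∈ orthantBoundary k ↔ ∃ i, (x i : ℝ) = 0 := by
  simp [orthantBoundary, Finset.prod_eq_zero_iff]

def orthantShift (x : Orthant k) (m : Ici (0 : ℝ)) : Orthant k :=
  fun i => ⟨x i + m, mem_Ici.2 (add_nonneg (x i).2 m.2)⟩

def orthantProd (y : Orthant k) : Ici (0 : ℝ) :=
  ⟨∏ i, (y i : ℝ), mem_Ici.2 (Finset.prod_nonneg fun i _ => (y i).2)⟩

theorem continuous_orthantShift : Continuous (uncurry (orthantShift (k := k))) :=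
  continuous_pi fun i => by unfold orthantShift; fun_prop

theorem continuous_orthantProd : Continuous (orthantProd (k := k)) := by
  unfold orthantProd; fun_prop

variable [NeZero k]

noncomputable def orthantMin (y : Orthant k) : Ici (0 : ℝ) :=
  Finset.univ.inf' Finset.univ_nonempty y

@[fun_prop]
theorem continuous_orthantMin : Continuous (orthantMin (k := k)) :=
  Continuous.finset_inf'_apply _ fun i _ => continuous_apply i

theorem orthantMin_le (y : Orthant k) (i : Fin k) : orthantMin y ≤ y i :=
  Finset.inf'_le y (Finset.mem_univ i)

theorem exists_apply_eq_orthantMin (y : Orthant k) : ∃ i, y i = orthantMin y := by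
  obtain ⟨i, -, hi⟩ := Finset.exists_mem_eq_inf' Finset.univ_nonempty y
  exact ⟨i, hi.symm⟩

theorem orthantMin_orthantShift {x : Orthant k} (hx : x ∈ orthantBoundary k)
    (m : Ici (0 : ℝ)) : orthantMin (orthantShift x m) = m := by
  obtain ⟨i, hi⟩ := mem_orthantBoundary_iff.1 hx
  refine le_antisymm ?_ (Finset.le_inf' _ _ fun j _ => ?_)
  · refine (orthantMin_le _ i).trans_eq (Subtype.ext ?_)
    simp [orthantShift, hi]
  · exact Subtype.mk_le_mk.2 (le_add_of_nonneg_left (x j).2)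

noncomputable def orthantSubMin (y : Orthant k) : orthantBoundary k :=
  ⟨fun i => ⟨y i - orthantMin y, mem_Ici.2 (sub_nonneg.2 (orthantMin_le y i))⟩,
    mem_orthantBoundary_iff.2 <| (exists_apply_eq_orthantMin y).imp fun i hi => by simp [hi]⟩

theorem continuous_orthantSubMin : Continuous (orthantSubMin (k := k)) := by
  unfold orthantSubMin
  fun_prop

@[simps]
noncomputable def orthantBoundaryProdHomeomorph :
    orthantBoundary k × Ici (0 : ℝ) ≃ₜ Orthant k where
  toFun p := orthantShift p.1 p.2
  invFun y := (orthantSubMin y, orthantMin y)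
  left_inv := fun ⟨⟨x, hx⟩, m⟩ => by
    ext <;> simp [orthantSubMin, orthantMin_orthantShift hx, orthantShift]
  right_inv y := by
    ext; simp [orthantSubMin, orthantShift]
  continuous_toFun :=
    continuous_orthantShift.comp (continuous_subtype_val.prodMap continuous_id)
  continuous_invFun := continuous_orthantSubMin.prodMk continuous_orthantMin

theorem strictMono_orthantProd_orthantShift (x : Orthant k) :
    StrictMono fun m => orthantProd (orthantShift x m) :=
  fun a b hab => strictMonoOn_prod_add (fun i => (x i).2) a.2 b.2 hab

theorem surjective_orthantProd_orthantShift {x : Orthant k} (hx : x ∈ orthantBoundary k) :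
    Surjective fun m => orthantProd (orthantShift x m) := fun t =>
  let ⟨s, hs, hst⟩ := exists_prod_add_eq (fun i => (x i).2) hx t.2
  ⟨⟨s, hs⟩, Subtype.ext hst⟩

end Orthant

/-- Straightening of corners for the closed orthant: for `k ≥ 1` and
`D = {x ∈ [0,∞)^k : x₁⋯x_k = 0}`, there exists a homeomorphism
`H : D × [0,∞) → [0,∞)^k` such that `H(x,t)₁⋯H(x,t)_k = t` and `H(x,0) = x`
for all `x ∈ D`, `t ∈ [0,∞)`. -/
theorem orthant_straightening (k : ℕ) (hk : 1 ≤ k) :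
    ∃ H : ((orthantBoundary k) × (Set.Ici (0 : ℝ))) ≃ₜ Orthant k,
      (∀ (x : orthantBoundary k) (t : Set.Ici (0 : ℝ)),
          ∏ i, ((H (x, t)) i : ℝ) = (t : ℝ)) ∧
      (∀ x : orthantBoundary k, H (x, ⟨0, Set.self_mem_Ici⟩) = (x : Orthant k)) := by
  have : NeZero k := ⟨by omega⟩
  let P := Homeomorph.prodOfStrictMonoFiberwise
    (fun (x : orthantBoundary k) m => orthantProd (orthantShift (x : Orthant k) m))
    (continuous_orthantProd.comp
      (continuous_orthantShift.comp (continuous_subtype_val.prodMap continuous_id)))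
    (fun x => strictMono_orthantProd_orthantShift (x : Orthant k))
    (fun x => surjective_orthantProd_orthantShift x.2)
  refine ⟨P.symm.trans orthantBoundaryProdHomeomorph, fun x t => ?_, fun x => ?_⟩
  · exact congrArg (fun p => (p.2 : ℝ)) (P.apply_symm_apply (x, t))
  · have hP : P.symm (x, ⟨0, self_mem_Ici⟩) = (x, ⟨0, self_mem_Ici⟩) :=
      P.symm_apply_eq.2 <| Prod.ext rfl <| Subtype.ext <| by
        simpa [P, orthantProd, orthantShift] using x.2.symm
    rw [Homeomorph.trans_apply, hP]
    ext i
    simp [orthantShift]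
end

section
/- For every integer k ≥ 1 and every real number t ≥ 0, the level set {x ∈ [0,∞)^k : x₁⋯x_k = t} (with its subspace topology) is homeomorphic to ℝ^{k−1}. In particular, for every t > 0 the level set {x ∈ [0,∞)^k : x₁⋯x_k = t} is homeomorphic to the boundary {x ∈ [0,∞)^k : x₁⋯x_k = 0}. -/
/-- The level set `{x ∈ [0,∞)^k : x₁⋯x_k = t}` of the standard total boundary
defining function `ρ(x) = x₁⋯x_k` on the closed orthant. -/
def orthantLevel (k : ℕ) (t : ℝ) : Set (Orthant k) := {x | ∏ i, (x i : ℝ) = t}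

/-!
For `t > 0` every coordinate of a point of the level set is positive, and the coordinatewise
logarithm identifies the level set with the affine hyperplane `∑ yᵢ = log t`, which is the graph
of a function of its first `k - 1` coordinates.

The boundary `t = 0` is a section of the projection of `ℝᵏ` along the diagonal `(1, …, 1)`:
the line `x + ℝ (1, …, 1)` meets it exactly once, at `x - (minᵢ xᵢ) (1, …, 1)`, and these lines
are parametrised by the differences `xᵢ - x_k`, `i < k`.
-/

open Finset

section SumLevel

/-- The hyperplane `∑ yᵢ = c` is the graph of `y_n = c - ∑_{i < n} yᵢ`. -/
noncomputable def sumLevelHomeo (n : ℕ) (c : ℝ) :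
    {y : Fin (n + 1) → ℝ | ∑ i, y i = c} ≃ₜ (Fin n → ℝ) where
  toFun y := Fin.init y.1
  invFun z := ⟨Fin.snoc z (c - ∑ i, z i), by simp [Fin.sum_univ_castSucc]⟩
  left_inv := by
    rintro ⟨y, hy⟩
    have hlast : c - ∑ i, Fin.init y i = y (Fin.last n) := by
      rw [← hy, Fin.sum_univ_castSucc]
      simp [Fin.init]
    ext1
    simp only [hlast, Fin.snoc_init_self]
  right_inv z := Fin.init_snoc _ _
  continuous_toFun := by fun_prop
  continuous_invFun := by
    refine Continuous.subtype_mk (continuous_pi fun i => ?_) _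
    refine Fin.lastCases ?_ (fun j => ?_) i <;> simp only [Fin.snoc_last, Fin.snoc_castSucc] <;>
      fun_prop

end SumLevel

section PositiveLevel

variable {k : ℕ} {t : ℝ}

lemma pos_of_mem_orthantLevel (ht : 0 < t) {x : Orthant k} (hx : x ∈ orthantLevel k t)
    (i : Fin k) : 0 < (x i : ℝ) := by
  refine (x i).2.lt_of_ne' fun hi => ht.ne' ?_
  rw [← hx]
  exact prod_eq_zero (mem_univ i) hi

/-- Coordinatewise logarithm. -/
noncomputable def orthantLevelLogHomeo (ht : 0 < t) :
    orthantLevel k t ≃ₜ {y : Fin k → ℝ | ∑ i, y i = Real.log t} where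
  toFun x := ⟨fun i => Real.log (x.1 i), by
    rw [Set.mem_ofPred_eq, ← Real.log_prod fun i _ => (pos_of_mem_orthantLevel ht x.2 i).ne']
    exact congrArg _ x.2⟩
  invFun y := ⟨fun i => ⟨Real.exp (y.1 i), (Real.exp_pos _).le⟩, by
    change ∏ i, Real.exp (y.1 i) = t
    rw [← Real.exp_sum, y.2, Real.exp_log ht]⟩
  left_inv x := by
    ext i
    exact Real.exp_log (pos_of_mem_orthantLevel ht x.2 i)
  right_inv y := by
    ext i
    exact Real.log_exp _
  continuous_toFun := by
    refine Continuous.subtype_mk (continuous_pi fun i => Continuous.log ?_ ?_) _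
    · exact continuous_subtype_val.comp ((continuous_apply i).comp continuous_subtype_val)
    · exact fun x => (pos_of_mem_orthantLevel ht x.2 i).ne'
  continuous_invFun := by
    refine Continuous.subtype_mk (continuous_pi fun i => Continuous.subtype_mk ?_ _) _
    exact Real.continuous_exp.comp ((continuous_apply i).comp continuous_subtype_val)

end PositiveLevel

section Diagonal

variable {ι : Type*} [Fintype ι] [Nonempty ι]

noncomputable def subInf (x : ι → ℝ) : ι → ℝ := fun i => x i - univ.inf' univ_nonempty x

lemma subInf_nonneg (x : ι → ℝ) (i : ι) : 0 ≤ subInf x i :=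
  sub_nonneg.2 (inf'_le _ (mem_univ i))

lemma exists_subInf_eq_zero (x : ι → ℝ) : ∃ i, subInf x i = 0 := by
  obtain ⟨i, -, hi⟩ := exists_mem_eq_inf' univ_nonempty x
  exact ⟨i, sub_eq_zero.2 hi.symm⟩

lemma subInf_add_const (x : ι → ℝ) (c : ℝ) : subInf (fun i => x i + c) = subInf x := by
  have hinf : univ.inf' univ_nonempty (fun i => x i + c) = univ.inf' univ_nonempty x + c :=
    (map_finset_inf' (OrderIso.addRight c) univ_nonempty x).symm
  ext i
  simp only [subInf, hinf]
  ring

lemma subInf_eq_self {x : ι → ℝ} (hx : ∀ i, 0 ≤ x i) (hx₀ : ∃ i, x i = 0) : subInf x = x := by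
  obtain ⟨j, hj⟩ := hx₀
  have hinf : univ.inf' univ_nonempty x = 0 :=
    le_antisymm (hj ▸ inf'_le _ (mem_univ j)) (le_inf' _ _ fun i _ => hx i)
  ext i
  simp [subInf, hinf]

lemma continuous_subInf : Continuous (subInf : (ι → ℝ) → ι → ℝ) :=
  continuous_pi fun i => (continuous_apply i).sub <|
    Continuous.finset_inf'_apply univ_nonempty fun j _ => continuous_apply j

end Diagonal

section ZeroLevel

variable {n : ℕ}

/-- These differences determine `x` up to translation along the diagonal. -/
def lastDiff (x : Fin (n + 1) → ℝ) : Fin n → ℝ := fun i => x i.castSucc - x (Fin.last n)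

@[simp]
lemma lastDiff_snoc_zero (y : Fin n → ℝ) : lastDiff (Fin.snoc y 0) = y := by
  ext i
  simp [lastDiff]

@[simp]
lemma lastDiff_subInf (x : Fin (n + 1) → ℝ) : lastDiff (subInf x) = lastDiff x := by
  ext i
  simp [lastDiff, subInf]

lemma snoc_lastDiff (x : Fin (n + 1) → ℝ) :
    Fin.snoc (lastDiff x) 0 = fun i => x i + -x (Fin.last n) := by
  ext i
  refine Fin.lastCases ?_ (fun j => ?_) i <;> simp [lastDiff, sub_eq_add_neg]

lemma continuous_lastDiff : Continuous (lastDiff : (Fin (n + 1) → ℝ) → Fin n → ℝ) :=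
  continuous_pi fun _ => (continuous_apply _).sub (continuous_apply _)

lemma mem_orthantLevel_zero_iff {k : ℕ} {x : Orthant k} :
    x ∈ orthantLevel k 0 ↔ ∃ i, (x i : ℝ) = 0 := by
  simp [orthantLevel, prod_eq_zero_iff]

noncomputable def orthantLevelZeroHomeo (n : ℕ) : orthantLevel (n + 1) 0 ≃ₜ (Fin n → ℝ) where
  toFun x := lastDiff fun i => (x.1 i : ℝ)
  invFun y := ⟨fun i => ⟨subInf (Fin.snoc y 0) i, subInf_nonneg _ i⟩,
    mem_orthantLevel_zero_iff.2 (exists_subInf_eq_zero _)⟩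
  left_inv x := by
    have hx := subInf_eq_self (fun i => (x.1 i).2) (mem_orthantLevel_zero_iff.1 x.2)
    ext i
    simp only [snoc_lastDiff, subInf_add_const, hx]
  right_inv y := by simp
  continuous_toFun := continuous_lastDiff.comp <| continuous_pi fun i =>
    continuous_subtype_val.comp ((continuous_apply i).comp continuous_subtype_val)
  continuous_invFun := by
    refine Continuous.subtype_mk (continuous_pi fun i => Continuous.subtype_mk ?_ _) _
    refine (continuous_apply i).comp (continuous_subInf.comp (continuous_pi fun j => ?_))
    refine Fin.lastCases ?_ (fun j => ?_) j <;> simp only [Fin.snoc_last, Fin.snoc_castSucc]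
    exacts [continuous_const, continuous_apply j]

end ZeroLevel

/-- For every integer `k ≥ 1` and every real `t ≥ 0`, the level set
`{x ∈ [0,∞)^k : x₁⋯x_k = t}` is homeomorphic to `ℝ^{k−1}`; in particular, for
every `t > 0` it is homeomorphic to the boundary `{x ∈ [0,∞)^k : x₁⋯x_k = 0}`. -/
theorem orthantLevel_homeo (k : ℕ) (hk : 1 ≤ k) :
    (∀ t : ℝ, 0 ≤ t →
      Nonempty ((orthantLevel k t) ≃ₜ (Fin (k - 1) → ℝ))) ∧
    (∀ t : ℝ, 0 < t →
      Nonempty ((orthantLevel k t) ≃ₜ (orthantLevel k 0))) := by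
  obtain ⟨n, rfl⟩ := Nat.exists_eq_add_of_le' hk
  have hpos (t : ℝ) (ht : 0 < t) : orthantLevel (n + 1) t ≃ₜ (Fin n → ℝ) :=
    (orthantLevelLogHomeo ht).trans (sumLevelHomeo n _)
  refine ⟨fun t ht => ?_, fun t ht => ⟨(hpos t ht).trans (orthantLevelZeroHomeo n).symm⟩⟩
  rcases ht.eq_or_lt with rfl | ht
  · exact ⟨orthantLevelZeroHomeo n⟩
  · exact ⟨hpos t ht⟩
end

section
/- Let n ≥ k ≥ 1 and let D = {(x,y) ∈ [0,∞)^k × ℝ^{n−k} : x₁⋯x_k = 0}. There exists a homeomorphism H : D × [0,∞) → [0,∞)^k × ℝ^{n−k} such that, writing H((x,y),t) = (x',y'), one has x'₁⋯x'_k = t for all ((x,y),t), H((x,y),0) = (x,y), and moreover H preserves each coordinate hyperplane of the second factor: for every j ∈ {1,…,n−k}, H((x,y),t) has j-th second-factor coordinate zero if and only if y_j = 0. -/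
/-!
Translating along the diagonal `(1, …, 1)` of `[0,∞)^k` preserves the corner, and every orbit
meets the boundary `{∏ xᵢ = 0}` exactly once, at `x - (min xᵢ)·(1, …, 1)`. Along the orbit of
a boundary point `b` the product `s ↦ ∏ (bᵢ + s)` increases strictly from `0` to `∞`, so each
level `t ≥ 0` is hit at a unique time `s(b, t)`; monotonicity makes the conditions
`a < s(b, t)` and `s(b, t) < a` open in `(b, t)`, so `s` is continuous. Hence
`((b, y), t) ↦ (b + s(b, t)·(1, …, 1), y)` is a homeomorphism with inverse
`(x, y) ↦ ((x - (min xᵢ)·(1, …, 1), y), ∏ xᵢ)`, and it never touches `y`.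
-/

/-- The corner model `[0,∞)^k × ℝ^{n−k}` with its (subspace/product) topology. -/
abbrev CornerModel (k m : ℕ) : Type := (Fin k → (Set.Ici (0 : ℝ))) × (Fin m → ℝ)

/-- The boundary `D = {(x,y) ∈ [0,∞)^k × ℝ^{n−k} : x₁⋯x_k = 0}`. -/
def cornerBoundary (k m : ℕ) : Set (CornerModel k m) := {p | ∏ i, (p.1 i : ℝ) = 0}

open Finset Set Filter Topology

theorem continuous_of_strictMonoOn_of_apply_eq {X : Type*} [TopologicalSpace X]
    {F : X → ℝ → ℝ} {g s : X → ℝ} {c : ℝ} (hF : ∀ a, Continuous fun x => F x a)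
    (hg : Continuous g) (hmono : ∀ x, StrictMonoOn (F x) (Ici c)) (hs : ∀ x, c ≤ s x)
    (hFs : ∀ x, F x (s x) = g x) : Continuous s := by
  refine continuous_iff_continuousAt.2 fun x₀ =>
    tendsto_order.2 ⟨fun a ha => ?_, fun a ha => ?_⟩
  · rcases lt_or_ge a c with hac | hca
    · exact .of_forall fun x => hac.trans_le (hs x)
    have hlt : F x₀ a < g x₀ := hFs x₀ ▸ hmono x₀ hca (hs x₀) ha
    filter_upwards [(hF a).continuousAt.eventually_lt hg.continuousAt hlt] with x hx
    exact ((hmono x).lt_iff_lt hca (hs x)).1 (hFs x ▸ hx)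
  · have hca : c ≤ a := (hs x₀).trans ha.le
    have hlt : g x₀ < F x₀ a := hFs x₀ ▸ hmono x₀ (hs x₀) hca ha
    filter_upwards [hg.continuousAt.eventually_lt (hF a).continuousAt hlt] with x hx
    exact ((hmono x).lt_iff_lt (hs x) hca).1 (hFs x ▸ hx)

section DiagonalShift

variable {ι : Type*} [Fintype ι] [Nonempty ι] {b : ι → ℝ} {t : ℝ}

theorem strictMonoOn_prod_add_s18 (hb : ∀ i, 0 ≤ b i) :
    StrictMonoOn (fun s => ∏ i, (b i + s)) (Ici 0) := by
  intro a (ha : 0 ≤ a) s _ has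
  calc ∏ i, (b i + a) ≤ ∏ i, (b i + (a + s) / 2) :=
        prod_le_prod (fun i _ => add_nonneg (hb i) ha) fun i _ => by linarith
    _ < ∏ i, (b i + s) :=
        prod_lt_prod_of_nonempty (fun i _ => by linarith [hb i]) (fun i _ => by linarith)
          univ_nonempty

theorem exists_prod_add_eq_s18 (hb : ∀ i, 0 ≤ b i) (ht : ∏ i, b i ≤ t) :
    ∃ s ∈ Ici (0 : ℝ), ∏ i, (b i + s) = t := by
  have hcont : Continuous fun s : ℝ => ∏ i, (b i + s) := by fun_prop
  have htop : Tendsto (fun s : ℝ => ∏ i, (b i + s)) atTop atTop := by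
    refine tendsto_atTop_mono' atTop ?_ (tendsto_pow_atTop (Fintype.card_ne_zero (α := ι)))
    filter_upwards [eventually_ge_atTop 0] with s hs
    calc s ^ Fintype.card ι = ∏ _i : ι, s := by rw [prod_const, card_univ]
      _ ≤ ∏ i, (b i + s) := prod_le_prod (fun _ _ => hs) fun i _ => le_add_of_nonneg_left (hb i)
  exact intermediate_value_Ici hcont.continuousOn htop (by simpa using ht)

variable (b t) in
/-- The time at which `b` reaches the level set `{∏ = t}` when translated along the diagonal;
junk unless `0 ≤ b` and `∏ b ≤ t`. -/
noncomputable def diagonalShift : ℝ :=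
  Function.invFunOn (fun s => ∏ i, (b i + s)) (Ici 0) t

theorem diagonalShift_nonneg (hb : ∀ i, 0 ≤ b i) (ht : ∏ i, b i ≤ t) :
    0 ≤ diagonalShift b t :=
  Function.invFunOn_mem (exists_prod_add_eq_s18 hb ht)

theorem prod_add_diagonalShift (hb : ∀ i, 0 ≤ b i) (ht : ∏ i, b i ≤ t) :
    ∏ i, (b i + diagonalShift b t) = t :=
  Function.invFunOn_eq (exists_prod_add_eq_s18 hb ht)

theorem diagonalShift_eq (hb : ∀ i, 0 ≤ b i) {s : ℝ} (hs : 0 ≤ s)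
    (h : ∏ i, (b i + s) = t) : diagonalShift b t = s := by
  have ht : ∏ i, b i ≤ t :=
    h ▸ prod_le_prod (fun i _ => hb i) fun i _ => le_add_of_nonneg_right hs
  exact (strictMonoOn_prod_add_s18 hb).injOn (diagonalShift_nonneg hb ht) hs
    ((prod_add_diagonalShift hb ht).trans h.symm)

theorem Continuous.diagonalShift {X : Type*} [TopologicalSpace X]
    {b : X → ι → ℝ} {t : X → ℝ}
    (hb : Continuous b) (ht : Continuous t) (hb₀ : ∀ x i, 0 ≤ b x i)
    (hbt : ∀ x, ∏ i, b x i ≤ t x) : Continuous fun x => diagonalShift (b x) (t x) :=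
  continuous_of_strictMonoOn_of_apply_eq (F := fun x s => ∏ i, (b x i + s)) (fun a => by fun_prop)
    ht (fun x => strictMonoOn_prod_add_s18 (hb₀ x)) (fun x => diagonalShift_nonneg (hb₀ x) (hbt x))
    fun x => prod_add_diagonalShift (hb₀ x) (hbt x)

theorem inf'_univ_add_const (b : ι → ℝ) (s : ℝ) :
    univ.inf' univ_nonempty (fun i => b i + s) = univ.inf' univ_nonempty b + s :=
  (map_finset_inf' (OrderIso.addRight s) univ_nonempty b).symm

theorem inf'_univ_eq_zero_of_prod_eq_zero (hb : ∀ i, 0 ≤ b i) (h : ∏ i, b i = 0) :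
    univ.inf' univ_nonempty b = 0 := by
  obtain ⟨i, -, hi⟩ := prod_eq_zero_iff.1 h
  exact le_antisymm (hi ▸ inf'_le b (mem_univ i)) (le_inf' _ _ fun i _ => hb i)

theorem prod_sub_inf'_univ (b : ι → ℝ) : ∏ i, (b i - univ.inf' univ_nonempty b) = 0 := by
  obtain ⟨i, -, hi⟩ := exists_mem_eq_inf' univ_nonempty b
  exact prod_eq_zero (mem_univ i) (by rw [hi, sub_self])

end DiagonalShift

section Straightening

variable {k m : ℕ} [NeZero k]

noncomputable def straighten : cornerBoundary k m × Ici (0 : ℝ) ≃ₜ CornerModel k m where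
  toFun z :=
    (fun i => ⟨z.1.1.1 i + diagonalShift (fun j => (z.1.1.1 j : ℝ)) z.2,
      add_nonneg (z.1.1.1 i).2
        (diagonalShift_nonneg (fun j => (z.1.1.1 j).2) (z.1.2.trans_le z.2.2))⟩,
     z.1.1.2)
  invFun q :=
    (⟨(fun i => ⟨q.1 i - univ.inf' univ_nonempty (fun j => (q.1 j : ℝ)),
        mem_Ici.2 (sub_nonneg.2 (inf'_le _ (mem_univ i)))⟩, q.2), prod_sub_inf'_univ _⟩,
     ⟨∏ i, (q.1 i : ℝ), mem_Ici.2 (prod_nonneg fun i _ => (q.1 i).2)⟩)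
  left_inv := by
    rintro ⟨⟨⟨x, y⟩, hx : ∏ i, (x i : ℝ) = 0⟩, t⟩
    have hx₀ : ∀ i, 0 ≤ (x i : ℝ) := fun i => (x i).2
    have hxt : ∏ i, (x i : ℝ) ≤ t := hx.trans_le t.2
    have hmin := inf'_univ_eq_zero_of_prod_eq_zero hx₀ hx
    ext i
    · simp [inf'_univ_add_const (fun i => (x i : ℝ)), hmin]
    · rfl
    · exact prod_add_diagonalShift hx₀ hxt
  right_inv := by
    rintro ⟨x, y⟩
    set μ := univ.inf' univ_nonempty fun j => (x j : ℝ)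
    have hμ : ∀ i, μ ≤ x i := fun i => inf'_le _ (mem_univ i)
    have hshift : diagonalShift (fun i => (x i : ℝ) - μ) (∏ i, (x i : ℝ)) = μ :=
      diagonalShift_eq (fun i => sub_nonneg.2 (hμ i)) (le_inf' _ _ fun i _ => (x i).2)
        (by simp only [sub_add_cancel])
    ext i
    · change (x i : ℝ) - μ + diagonalShift (fun i => (x i : ℝ) - μ) (∏ i, (x i : ℝ)) =
        x i
      rw [hshift, sub_add_cancel]
    · rfl
  continuous_toFun := by
    have hshift := Continuous.diagonalShift (X := cornerBoundary k m × Ici (0 : ℝ))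
      (b := fun z j => (z.1.1.1 j : ℝ)) (t := fun z => z.2) (by fun_prop) (by fun_prop)
      (fun z j => (z.1.1.1 j).2) fun z => z.1.2.trans_le z.2.2
    fun_prop
  continuous_invFun := by
    have hmin : Continuous fun q : CornerModel k m =>
        univ.inf' univ_nonempty fun j => (q.1 j : ℝ) :=
      .finset_inf'_apply _ fun j _ => by fun_prop
    fun_prop

theorem straighten_snd (z : cornerBoundary k m × Ici (0 : ℝ)) :
    (straighten z).2 = (z.1 : CornerModel k m).2 :=
  rfl

theorem prod_straighten (z : cornerBoundary k m × Ici (0 : ℝ)) :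
    ∏ i, ((straighten z).1 i : ℝ) = z.2 :=
  prod_add_diagonalShift (fun j => (z.1.1.1 j).2) (z.1.2.trans_le z.2.2)

theorem straighten_zero (p : cornerBoundary k m) :
    straighten (p, ⟨0, self_mem_Ici⟩) = (p : CornerModel k m) := by
  have hshift : diagonalShift (fun j => (p.1.1 j : ℝ)) 0 = 0 :=
    diagonalShift_eq (fun j => (p.1.1 j).2) le_rfl (by simp only [add_zero]; exact p.2)
  ext i
  · change (p.1.1 i : ℝ) + diagonalShift (fun j => (p.1.1 j : ℝ)) 0 = p.1.1 i
    rw [hshift, add_zero]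
  · rfl

end Straightening

/-- Relative straightening of corners: for `n = k + m ≥ k ≥ 1` and
`D = {(x,y) ∈ [0,∞)^k × ℝ^{n−k} : x₁⋯x_k = 0}`, there is a homeomorphism
`H : D × [0,∞) → [0,∞)^k × ℝ^{n−k}` such that, writing `H((x,y),t) = (x',y')`,
one has `x'₁⋯x'_k = t`, `H((x,y),0) = (x,y)`, and `H` preserves each coordinate
hyperplane of the second factor: the `j`-th second-factor coordinate of
`H((x,y),t)` vanishes if and only if `y_j = 0`. -/
theorem corner_relative_straightening (k m : ℕ) (hk : 1 ≤ k) :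
    ∃ H : ((cornerBoundary k m) × (Set.Ici (0 : ℝ))) ≃ₜ CornerModel k m,
      (∀ (p : cornerBoundary k m) (t : Set.Ici (0 : ℝ)),
          ∏ i, ((H (p, t)).1 i : ℝ) = (t : ℝ)) ∧
      (∀ p : cornerBoundary k m,
          H (p, ⟨0, Set.self_mem_Ici⟩) = (p : CornerModel k m)) ∧
      (∀ (p : cornerBoundary k m) (t : Set.Ici (0 : ℝ)) (j : Fin m),
          (H (p, t)).2 j = 0 ↔ (p : CornerModel k m).2 j = 0) := by
  have : NeZero k := ⟨by omega⟩
  exact ⟨straighten, fun p t => prod_straighten (p, t), straighten_zero,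
    fun p t j => by rw [straighten_snd]⟩
end
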